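/- arXiv:2509.01870 — 2 statements merged into one kernel-verified Lean document; each statement's English description precedes it below -/
import Mathlib

section
/- (No SE with payoff v outside A_v.) Let G = (A, Φ) be an n-player game on a finite arena A with objective profile Φ = (φ₁, …, φ_n), where every φ_i is a Muller objective, and let v = (v₁, …, v_n) ∈ {0,1}^n. Let I = [1,n], W = {i | v_i = 1}, L = {i | v_i = 0}, φ_W = ⋂_{i∈W} φ_i, φ_L = ⋃_{i∈L} φ_i, and A_v = ⋂_{w∈W} ⟨⟨I\{w}⟩⟩(φ_W ∪ φ_L ∪ ¬φ_w) ∩ ⋂_{l∈L} ⟨⟨I\{l}⟩⟩((φ_W ∪ φ_L) ∩ ¬φ_l). If s ∈ S \ A_v, then s ∉ SE_v, i.e., there is no secure equilibrium Σ at s with Pay_s^Σ(Φ) = v. -/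
/-- The set of states occurring infinitely often in the infinite sequence `ρ`. -/
def infOcc {S : Type*} (ρ : ℕ → S) : Set S := {t | ∀ N, ∃ k ≥ N, ρ k = t}

/-- Büchi objective: `inf(ρ) ∩ B ≠ ∅`. -/
def Buchi {S : Type*} (B : Set S) : Set (ℕ → S) := {ρ | (infOcc ρ ∩ B).Nonempty}

/-- co-Büchi objective: `inf(ρ) ∩ B = ∅`. -/
def CoBuchi {S : Type*} (B : Set S) : Set (ℕ → S) := {ρ | infOcc ρ ∩ B = ∅}

/-- Parity objective: the minimum color seen infinitely often is even. -/
def ParityObj {S : Type*} (p : S → ℕ) : Set (ℕ → S) :=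
  {ρ | Even (sInf (p '' infOcc ρ))}

/-- Streett objective given a set of pairs. -/
def Streett {S : Type*} (T : Set (Set S × Set S)) : Set (ℕ → S) :=
  ⋂ FG ∈ T, (CoBuchi FG.1 ∪ Buchi FG.2)

/-- Rabin objective given a set of pairs. -/
def Rabin {S : Type*} (R : Set (Set S × Set S)) : Set (ℕ → S) :=
  ⋃ FG ∈ R, (Buchi FG.1 ∩ CoBuchi FG.2)

/-- A Muller objective: membership depends only on the set of states visited infinitely often. -/
def IsMuller {S : Type*} (φ : Set (ℕ → S)) : Prop :=
  ∃ F : Set (Set S), φ = {ρ | infOcc ρ ∈ F}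


/-- An `n`-player game arena: the decomposition `(S_i)` of the state set is given by the
`owner` function, `E` is the transition relation, and every state has an `E`-successor. -/
structure Arena (n : ℕ) (S : Type*) where
  owner : S → Fin n
  E : S → S → Prop
  succ_exists : ∀ s, ∃ t, E s t

namespace Arena

variable {n : ℕ} {S : Type*}

/-- A play: an infinite `E`-path. -/
def IsPlay (A : Arena n S) (ρ : ℕ → S) : Prop := ∀ k, A.E (ρ k) (ρ (k + 1))

/-- A (total representation of a) strategy `σ : S* S_i → S`: given the history `h` and the
current state `s` (so the full finite sequence is `h · s`), it picks an `E`-successor of `s`. -/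
def IsStrategy (A : Arena n S) (σ : List S → S → S) : Prop :=
  ∀ h s, A.E s (σ h s)

/-- The history `ρ 0 … ρ (k-1)`. -/
def hist (ρ : ℕ → S) (k : ℕ) : List S := List.ofFn (fun j : Fin k => ρ j)

/-- The play `ρ` is consistent with strategy `σ` of player `i`: whenever the current state
belongs to player `i`, the next state is the one chosen by `σ`. -/
def Consistent (A : Arena n S) (i : Fin n) (σ : List S → S → S) (ρ : ℕ → S) : Prop :=
  ∀ k, A.owner (ρ k) = i → ρ (k + 1) = σ (hist ρ k) (ρ k)

/-- `Out_s(σ_i)`: plays starting at `s` consistent with player `i`'s strategy `σ`. -/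
def Out (A : Arena n S) (i : Fin n) (σ : List S → S → S) (s : S) : Set (ℕ → S) :=
  {ρ | ρ 0 = s ∧ A.IsPlay ρ ∧ A.Consistent i σ ρ}

/-- `Out_s(Σ_P)`: plays starting at `s` consistent with the strategies of all players in `P`. -/
def OutP (A : Arena n S) (P : Set (Fin n)) (σ : Fin n → List S → S → S) (s : S) :
    Set (ℕ → S) :=
  {ρ | ρ 0 = s ∧ A.IsPlay ρ ∧ ∀ i ∈ P, A.Consistent i (σ i) ρ}

/-- The winning region `⟨⟨P⟩⟩(φ)`: states from which the players in `P` have a strategy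
profile forcing `φ`. -/
def Win (A : Arena n S) (P : Set (Fin n)) (φ : Set (ℕ → S)) : Set S :=
  {s | ∃ σ : Fin n → List S → S → S,
    (∀ i ∈ P, A.IsStrategy (σ i)) ∧ A.OutP P σ s ⊆ φ}

/-- One step of unfolding a full strategy profile: extend the history and move to
the state chosen by the owner of the current state. -/
def step (A : Arena n S) (σ : Fin n → List S → S → S) : List S × S → List S × S :=
  fun hc => (hc.1 ++ [hc.2], σ (A.owner hc.2) hc.1 hc.2)

/-- `Out_s(Σ)` for a full strategy profile `Σ` is a unique play; `outcome` is that play. -/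
def outcome (A : Arena n S) (σ : Fin n → List S → S → S) (s : S) (k : ℕ) : S :=
  ((A.step σ)^[k] ([], s)).2

end Arena

/-- The payoff profile of a play `ρ` with respect to the objective profile `Φ`. -/
noncomputable def payoff {n : ℕ} {S : Type*} (Φ : Fin n → Set (ℕ → S)) (ρ : ℕ → S) :
    Fin n → Bool :=
  fun i => @decide (ρ ∈ Φ i) (Classical.propDecidable _)

/-- Player `i`'s preference order on payoff profiles. -/
def Pref {n : ℕ} (i : Fin n) (u u' : Fin n → Bool) : Prop :=
  u i < u' i ∨ (u i = u' i ∧ (∀ j, u' j ≤ u j) ∧ ∃ j, u' j < u j)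

namespace Arena

variable {n : ℕ} {S : Type*}

/-- `Σ` is a secure equilibrium at `s`: no player `i` has a deviation yielding a payoff
profile preferred by `i`. -/
def IsSE (A : Arena n S) (Φ : Fin n → Set (ℕ → S)) (σ : Fin n → List S → S → S)
    (s : S) : Prop :=
  ∀ i : Fin n, ¬ ∃ σ' : List S → S → S, A.IsStrategy σ' ∧
    Pref i (payoff Φ (A.outcome σ s)) (payoff Φ (A.outcome (Function.update σ i σ') s))

/-- `SE_v`: states at which some secure equilibrium yields the payoff profile `v`. -/
def SEset (A : Arena n S) (Φ : Fin n → Set (ℕ → S)) (v : Fin n → Bool) : Set S :=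
  {s | ∃ σ : Fin n → List S → S → S, (∀ i, A.IsStrategy (σ i)) ∧
    A.IsSE Φ σ s ∧ payoff Φ (A.outcome σ s) = v}

end Arena

/-- `φ_W = ⋂_{i ∈ W} φ_i` where `W = {i | v_i = 1}`. -/
def phiW {n : ℕ} {S : Type*} (Φ : Fin n → Set (ℕ → S)) (v : Fin n → Bool) : Set (ℕ → S) :=
  ⋂ i ∈ {i : Fin n | v i = true}, Φ i

/-- `φ_L = ⋃_{i ∈ L} φ_i` where `L = {i | v_i = 0}`. -/
def phiL {n : ℕ} {S : Type*} (Φ : Fin n → Set (ℕ → S)) (v : Fin n → Bool) : Set (ℕ → S) :=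
  ⋃ i ∈ {i : Fin n | v i = false}, Φ i

/-- The set `A_v` of states from which, for each player `i`, the other players can retaliate. -/
def Arena.Av {n : ℕ} {S : Type*} (A : Arena n S) (Φ : Fin n → Set (ℕ → S))
    (v : Fin n → Bool) : Set S :=
  (⋂ w ∈ {i : Fin n | v i = true},
      A.Win ({w}ᶜ) (phiW Φ v ∪ phiL Φ v ∪ (Φ w)ᶜ)) ∩
  (⋂ l ∈ {i : Fin n | v i = false},
      A.Win ({l}ᶜ) ((phiW Φ v ∪ phiL Φ v) ∩ (Φ l)ᶜ))

lemma payoff_eq_true_iff {n : ℕ} {S : Type*} (Φ : Fin n → Set (ℕ → S)) (ρ : ℕ → S) (i : Fin n) :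
    payoff Φ ρ i = true ↔ ρ ∈ Φ i := by
  simp [payoff]

lemma hist_length {S : Type*} (ρ : ℕ → S) (k : ℕ) : (Arena.hist ρ k).length = k := by
  simp [Arena.hist]

lemma hist_zero {S : Type*} (ρ : ℕ → S) : Arena.hist ρ 0 = [] := by
  simp [Arena.hist]

lemma hist_succ {S : Type*} (ρ : ℕ → S) (k : ℕ) :
    Arena.hist ρ (k + 1) = Arena.hist ρ k ++ [ρ k] := by
  show List.ofFn (fun j : Fin (k + 1) => ρ j) = _
  rw [List.ofFn_succ']
  simp [Arena.hist, List.concat_eq_append]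

/-- Any play consistent with the strategies of all players other than `w` can be realized
as the outcome of a deviation of player `w`. -/
lemma exists_deviation {n : ℕ} {S : Type*} (A : Arena n S) (σ : Fin n → List S → S → S)
    (w : Fin n) (s : S) (ρ : ℕ → S) (hρ : ρ ∈ A.OutP ({w}ᶜ) σ s) :
    ∃ σ' : List S → S → S, A.IsStrategy σ' ∧
      A.outcome (Function.update σ w σ') s = ρ := by
  classical
  obtain ⟨h0, hplay, hcons⟩ := hρ
  set σ' : List S → S → S := fun h t =>
    if t = ρ h.length then ρ (h.length + 1) else (A.succ_exists t).choose with hσ'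
  refine ⟨σ', ?_, ?_⟩
  · intro h t
    by_cases ht : t = ρ h.length
    · simp only [hσ', ht, if_pos rfl]
      exact hplay h.length
    · simp only [hσ', if_neg ht]
      exact (A.succ_exists t).choose_spec
  · have key : ∀ k, (A.step (Function.update σ w σ'))^[k] ([], s)
        = (Arena.hist ρ k, ρ k) := by
      intro k
      induction k with
      | zero => simp [hist_zero, h0]
      | succ k ih =>
        rw [Function.iterate_succ_apply', ih]
        unfold Arena.step
        refine Prod.ext ?_ ?_
        · simp [hist_succ]
        · simp only
          by_cases hw : A.owner (ρ k) = w
          · rw [hw, Function.update_self]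
            simp [hσ', hist_length]
          · rw [Function.update_of_ne hw]
            exact (hcons (A.owner (ρ k)) hw k rfl).symm
    funext k
    simpa [Arena.outcome] using congrArg Prod.snd (key k)

lemma mem_phiWL {n : ℕ} {S : Type*} (Φ : Fin n → Set (ℕ → S)) (v : Fin n → Bool) (ρ : ℕ → S)
    (h : (∀ j, payoff Φ ρ j ≤ v j) → ∀ j, v j ≤ payoff Φ ρ j) :
    ρ ∈ phiW Φ v ∪ phiL Φ v := by
  classical
  by_cases hall : ∀ j, payoff Φ ρ j ≤ v j
  · left
    have heq : ∀ j, payoff Φ ρ j = v j := fun j => le_antisymm (hall j) (h hall j)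
    refine Set.mem_iInter₂.mpr fun i hi => ?_
    have : payoff Φ ρ i = true := by rw [heq i]; exact hi
    exact (payoff_eq_true_iff Φ ρ i).mp this
  · right
    push_neg at hall
    obtain ⟨j, hj⟩ := hall
    have hjj : v j = false ∧ payoff Φ ρ j = true := by
      revert hj
      cases v j <;> cases payoff Φ ρ j <;> simp
    exact Set.mem_biUnion hjj.1 ((payoff_eq_true_iff Φ ρ j).mp hjj.2)

/-- No secure equilibrium with payoff profile `v` exists at a state outside `A_v`. -/
theorem not_mem_SEset_of_not_mem_Av {n : ℕ} {S : Type*} [Fintype S]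
    (A : Arena n S) (Φ : Fin n → Set (ℕ → S)) (hM : ∀ i, IsMuller (Φ i))
    (v : Fin n → Bool) (s : S) (hs : s ∉ A.Av Φ v) :
    s ∉ A.SEset Φ v := by
  rintro ⟨σ, hstr, hSE, hpay⟩
  apply hs
  constructor
  · refine Set.mem_iInter₂.mpr fun w hw => ?_
    refine ⟨σ, fun i _ => hstr i, fun ρ hρ => ?_⟩
    obtain ⟨σ', hσ'str, hout⟩ := exists_deviation A σ w s ρ hρ
    have hnp : ¬ Pref w v (payoff Φ ρ) := by
      intro hpref
      exact hSE w ⟨σ', hσ'str, by rwa [hpay, hout]⟩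
    unfold Pref at hnp
    push_neg at hnp
    obtain ⟨hnp1, hnp2⟩ := hnp
    by_cases huw : payoff Φ ρ w = true
    · left
      have hvw : v w = true := hw
      exact mem_phiWL Φ v ρ (hnp2 (by rw [hvw, huw]))
    · right
      intro hmem
      exact huw ((payoff_eq_true_iff Φ ρ w).mpr hmem)
  · refine Set.mem_iInter₂.mpr fun l hl => ?_
    refine ⟨σ, fun i _ => hstr i, fun ρ hρ => ?_⟩
    obtain ⟨σ', hσ'str, hout⟩ := exists_deviation A σ l s ρ hρ
    have hnp : ¬ Pref l v (payoff Φ ρ) := by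
      intro hpref
      exact hSE l ⟨σ', hσ'str, by rwa [hpay, hout]⟩
    unfold Pref at hnp
    push_neg at hnp
    obtain ⟨hnp1, hnp2⟩ := hnp
    have hvl : v l = false := hl
    have hul : payoff Φ ρ l = false := by
      rw [hvl] at hnp1
      revert hnp1
      cases payoff Φ ρ l <;> simp
    constructor
    · exact mem_phiWL Φ v ρ (hnp2 (by rw [hvl, hul]))
    · intro hmem
      exact absurd ((payoff_eq_true_iff Φ ρ l).mpr hmem) (by rw [hul]; simp)
end

section
/- (Reduction underlying the co-NP-hardness proof.) Let A be a 2-player game arena with finite state set S and let p₁, p₂ : S → ℕ be colorings. Consider the 2-player non-zero-sum game G' = (A, (Parity(p₁), ¬Parity(p₂))). Then for every state s, there exists a secure equilibrium Σ at s in G' with payoff profile Pay_s^Σ = (1,0) if and only if s ∈ ⟨⟨{1}⟩⟩(Parity(p₁) ∩ Parity(p₂)), i.e., if and only if player 1 has a strategy σ₁ with Out_s(σ₁) ⊆ Parity(p₁) ∩ Parity(p₂). -/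
namespace Arena

variable {S : Type*}

lemma fin2_cases (i : Fin 2) : i = 0 ∨ i = 1 := by omega

lemma hist_succ' (ρ : ℕ → S) (k : ℕ) : hist ρ (k + 1) = hist ρ k ++ [ρ k] := by
  rw [hist, List.ofFn_succ', List.concat_eq_append]
  simp [hist]

lemma hist_length' (ρ : ℕ → S) (k : ℕ) : (hist ρ k).length = k := by
  simp [hist]

lemma hist_congr' {ρ ρ' : ℕ → S} (k : ℕ) (h : ∀ j < k, ρ j = ρ' j) :
    hist ρ k = hist ρ' k :=
  congrArg List.ofFn (funext fun j => h j j.isLt)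

variable {n : ℕ} (A : Arena n S) (σ : Fin n → List S → S → S) (s : S)

lemma step_fst (k : ℕ) : ((A.step σ)^[k] ([], s)).1 = hist (A.outcome σ s) k := by
  induction k with
  | zero => rfl
  | succ k ih =>
    rw [Function.iterate_succ_apply', hist_succ']
    show ((A.step σ)^[k] ([], s)).1 ++ [((A.step σ)^[k] ([], s)).2] = _
    rw [ih]; rfl

lemma outcome_succ' (k : ℕ) :
    A.outcome σ s (k + 1) =
      σ (A.owner (A.outcome σ s k)) (hist (A.outcome σ s) k) (A.outcome σ s k) := by
  have h : A.outcome σ s (k + 1) = ((A.step σ) ((A.step σ)^[k] ([], s))).2 := by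
    rw [Arena.outcome, Function.iterate_succ_apply']
  rw [h]
  show σ (A.owner ((A.step σ)^[k] ([], s)).2) ((A.step σ)^[k] ([], s)).1
      ((A.step σ)^[k] ([], s)).2 = _
  rw [step_fst]
  rfl

lemma outcome_isPlay' (h : ∀ i, A.IsStrategy (σ i)) : A.IsPlay (A.outcome σ s) := by
  intro k
  rw [outcome_succ']
  exact h _ _ _

lemma outcome_consistent' (i : Fin n) : A.Consistent i (σ i) (A.outcome σ s) := by
  intro k hk
  rw [outcome_succ', hk]

lemma outcome_mem_outP' (h : ∀ i, A.IsStrategy (σ i)) (P : Set (Fin n)) :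
    A.outcome σ s ∈ A.OutP P σ s :=
  ⟨rfl, A.outcome_isPlay' σ s h, fun i _ => A.outcome_consistent' σ s i⟩

/-- A default strategy. -/
noncomputable def dflt : List S → S → S := fun _ t => Classical.choose (A.succ_exists t)

lemma dflt_isStrategy : A.IsStrategy A.dflt :=
  fun _ t => Classical.choose_spec (A.succ_exists t)

/-- The tracking strategy following the play `ρ`. -/
noncomputable def track (ρ : ℕ → S) : List S → S → S :=
  fun h t =>
    @ite _ (t = ρ h.length) (Classical.propDecidable _) (ρ (h.length + 1)) (A.dflt h t)

lemma track_isStrategy {ρ : ℕ → S} (hρ : A.IsPlay ρ) : A.IsStrategy (A.track ρ) := by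
  intro h t
  unfold track
  split
  · next hc => rw [hc]; exact hρ _
  · exact A.dflt_isStrategy h t

lemma outcome_track {A : Arena 2 S} {σ : Fin 2 → List S → S → S} {ρ : ℕ → S} {s : S}
    (h0 : ρ 0 = s) (hp : A.IsPlay ρ) (hc : A.Consistent 0 (σ 0) ρ) :
    A.outcome (Function.update σ 1 (A.track ρ)) s = ρ := by
  set σ' := Function.update σ 1 (A.track ρ) with hσ'
  have key : ∀ k, ∀ j ≤ k, A.outcome σ' s j = ρ j := by
    intro k
    induction k with
    | zero =>
      intro j hj
      rw [Nat.le_zero.mp hj]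
      exact h0.symm
    | succ k ih =>
      intro j hj
      rcases Nat.lt_succ_iff_lt_or_eq.mp (Nat.lt_succ_of_le hj) with hj' | hj'
      · exact ih j (Nat.lt_succ_iff.mp hj')
      · subst hj'
        rw [outcome_succ', hist_congr' k (fun j hj => ih j hj.le), ih k le_rfl]
        rcases fin2_cases (A.owner (ρ k)) with h | h
        · rw [h, hσ', Function.update_of_ne (by decide)]
          exact (hc k h).symm
        · rw [h, hσ', Function.update_self]
          unfold track
          rw [hist_length']
          simp
  funext k
  exact key k k le_rfl

end Arena

/-- Reduction underlying the co-NP-hardness proof: in the 2-player game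
`G' = (A, (Parity(p₁), ¬Parity(p₂)))`, there is a secure equilibrium at `s` with payoff
profile `(1,0)` iff player 1 can win `Parity(p₁) ∩ Parity(p₂)` from `s`. -/
theorem se_payoff_one_zero_iff_win {S : Type*} [Fintype S] (A : Arena 2 S)
    (p₁ p₂ : S → ℕ) (s : S) :
    (∃ σ : Fin 2 → List S → S → S, (∀ i, A.IsStrategy (σ i)) ∧
        A.IsSE ![ParityObj p₁, (ParityObj p₂)ᶜ] σ s ∧
        payoff ![ParityObj p₁, (ParityObj p₂)ᶜ] (A.outcome σ s) = ![true, false]) ↔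
      s ∈ A.Win {(0 : Fin 2)} (ParityObj p₁ ∩ ParityObj p₂) := by
  classical
  set Φ : Fin 2 → Set (ℕ → S) := ![ParityObj p₁, (ParityObj p₂)ᶜ] with hΦ
  have hΦ0 : Φ 0 = ParityObj p₁ := rfl
  have hΦ1 : Φ 1 = (ParityObj p₂)ᶜ := rfl
  have payoff_eq : ∀ ρ : ℕ → S, ρ ∈ ParityObj p₁ ∩ ParityObj p₂ →
      payoff Φ ρ = ![true, false] := by
    intro ρ hρ
    funext i
    rcases Arena.fin2_cases i with h | h <;> subst h <;>
      simp [payoff, hΦ0, hΦ1, hρ.1, hρ.2]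
  constructor
  · rintro ⟨σ, hstr, hse, hpay⟩
    refine ⟨σ, fun i _ => hstr i, ?_⟩
    rintro ρ ⟨h0, hplay, hcons⟩
    have hc0 : A.Consistent 0 (σ 0) ρ := hcons 0 rfl
    have htrk := A.track_isStrategy hplay
    have hout : A.outcome (Function.update σ 1 (A.track ρ)) s = ρ :=
      Arena.outcome_track h0 hplay hc0
    have hnot := hse 1
    push_neg at hnot
    have hnp := hnot (A.track ρ) htrk
    rw [hout, hpay] at hnp
    -- extract payoff info
    by_contra hmem
    apply hnp
    have h1 : payoff Φ ρ 1 = true ∨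
        (payoff Φ ρ 0 = false ∧ payoff Φ ρ 1 = false) := by
      by_cases hρ2 : ρ ∈ ParityObj p₂
      · have hρ1 : ρ ∉ ParityObj p₁ := fun h => hmem ⟨h, hρ2⟩
        right
        constructor <;> simp [payoff, hΦ0, hΦ1, hρ1, hρ2]
      · left; simp [payoff, hΦ1, hρ2]
    rcases h1 with h1 | ⟨h0', h1⟩
    · left; simp [h1]
    · right
      refine ⟨by simp [h1], fun j => ?_, ⟨0, by simp [h0']⟩⟩
      rcases Arena.fin2_cases j with h | h <;> subst h <;> simp [h0', h1]
  · rintro ⟨σ, hstr, hsub⟩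
    have hstr0 : A.IsStrategy (σ 0) := hstr 0 rfl
    set τ : Fin 2 → List S → S → S := Function.update σ 1 A.dflt with hτ
    have hτ0 : τ 0 = σ 0 := Function.update_of_ne (by decide) _ _
    have hτstr : ∀ i, A.IsStrategy (τ i) := by
      intro i
      rcases Arena.fin2_cases i with h | h <;> subst h
      · rw [hτ0]; exact hstr0
      · rw [hτ, Function.update_self]; exact A.dflt_isStrategy
    -- any play consistent with σ 0 from s is in the objective
    have hforce : ∀ ρ : ℕ → S, ρ 0 = s → A.IsPlay ρ → A.Consistent 0 (σ 0) ρ →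
        ρ ∈ ParityObj p₁ ∩ ParityObj p₂ := by
      intro ρ h0 hplay hc
      exact hsub ⟨h0, hplay, fun i hi => by rw [Set.mem_singleton_iff.mp hi]; exact hc⟩
    have houtmem : A.outcome τ s ∈ ParityObj p₁ ∩ ParityObj p₂ := by
      obtain ⟨h0, hplay, hcons⟩ := A.outcome_mem_outP' τ s hτstr {0}
      exact hforce _ h0 hplay (by have := hcons 0 rfl; rw [hτ0] at this; exact this)
    have hpay : payoff Φ (A.outcome τ s) = ![true, false] := payoff_eq _ houtmem
    refine ⟨τ, hτstr, ?_, hpay⟩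
    intro i
    rintro ⟨σ', hσ', hpref⟩
    rcases Arena.fin2_cases i with h | h <;> subst h
    · -- player 0 deviation
      rw [hpay] at hpref
      rcases hpref with h | ⟨heq, hle, j, hlt⟩
      · simp [Bool.lt_iff] at h
      · simp only [Matrix.cons_val_zero] at heq
        rcases Arena.fin2_cases j with h | h <;> subst h
        · simp only [Matrix.cons_val_zero] at hlt
          rw [← heq] at hlt
          exact lt_irrefl _ hlt
        · simp [Bool.lt_iff] at hlt
    · -- player 1 deviation: outcome still consistent with σ 0
      set τ' := Function.update τ 1 σ' with hτ'
      have hτ'0 : τ' 0 = σ 0 := by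
        rw [hτ', Function.update_of_ne (by decide), hτ0]
      have hτ'str : ∀ i, A.IsStrategy (τ' i) := by
        intro i
        rcases Arena.fin2_cases i with h | h <;> subst h
        · rw [hτ'0]; exact hstr0
        · rw [hτ', Function.update_self]; exact hσ'
      have hmem' : A.outcome τ' s ∈ ParityObj p₁ ∩ ParityObj p₂ := by
        obtain ⟨h0, hplay, hcons⟩ := A.outcome_mem_outP' τ' s hτ'str {0}
        exact hforce _ h0 hplay (by have := hcons 0 rfl; rw [hτ'0] at this; exact this)
      rw [hpay, payoff_eq _ hmem'] at hpref
      rcases hpref with h | ⟨_, _, j, hlt⟩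
      · exact lt_irrefl _ h
      · exact lt_irrefl _ hlt
end
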